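/- Under the Gaussian measurement error model X* = X + ε with ε ~ N(0, Σ_ε) independent of X, the error-corrected marginal distance variance satisfies dcov*(X*_k, X*_k) = dcov(X_k, X_k) for every coordinate k, where dcov* is computed using the corrected characteristic functions of X*_k. -/

import Mathlib

open MeasureTheory ProbabilityTheory

noncomputable def cConst (d : ℕ) : ℝ :=
  Real.pi ^ ((1 + (d : ℝ)) / 2) / Real.Gamma ((1 + (d : ℝ)) / 2)

noncomputable def w11 (r s : ℝ) : ℝ := (cConst 1 * cConst 1 * |r| ^ 2 * |s| ^ 2)⁻¹

noncomputable def phiR {Ω : Type*} [MeasureSpace Ω] (μ : Measure Ω) (U : Ω → ℝ) (r : ℝ) : ℂ :=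
  ∫ ω, Complex.exp (Complex.I * ((r * U ω : ℝ) : ℂ)) ∂μ

noncomputable def phiRR {Ω : Type*} [MeasureSpace Ω] (μ : Measure Ω) (U V : Ω → ℝ)
    (r s : ℝ) : ℂ :=
  ∫ ω, Complex.exp (Complex.I * ((r * U ω + s * V ω : ℝ) : ℂ)) ∂μ

/-- Ordinary squared distance covariance of two real random variables. -/
noncomputable def dcov2 {Ω : Type*} [MeasureSpace Ω] (μ : Measure Ω) (U V : Ω → ℝ) : ℝ :=
  ∫ r : ℝ, ∫ s : ℝ, ‖phiRR μ U V r s - phiR μ U r * phiR μ V s‖ ^ 2 * w11 r s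

/-- Error-corrected squared distance variance of a surrogate `X*_k`: the error appears in
both arguments, so the joint correction factor is `exp(σ² (r+s)²/2)` and each marginal
correction factor is `exp(σ² s²/2)`. -/
noncomputable def dcovStar2XX {Ω : Type*} [MeasureSpace Ω] (μ : Measure Ω) (W : Ω → ℝ)
    (σ2 : ℝ) : ℝ :=
  ∫ r : ℝ, ∫ s : ℝ,
    ‖phiRR μ W W r s * Complex.exp ((σ2 * (r + s) ^ 2 / 2 : ℝ) : ℂ)
        - (phiR μ W r * Complex.exp ((σ2 * r ^ 2 / 2 : ℝ) : ℂ)) *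
          (phiR μ W s * Complex.exp ((σ2 * s ^ 2 / 2 : ℝ) : ℂ))‖ ^ 2 * w11 r s

/-! The Gaussian error multiplies every characteristic function of `X_k + ε_k` by
`exp(-σ² t²/2)`, which the correction factors cancel exactly; since both arguments of the
distance variance are the same variable, the joint characteristic function at `(r, s)` is the
marginal one at `r + s`, and the joint correction `exp(σ² (r+s)²/2)` is the marginal correction
at `r + s`. Hence the corrected integrand coincides pointwise with the error-free one. -/

open Complex

section CharacteristicFunctions

variable {Ω : Type*} [MeasureSpace Ω] {μ : Measure Ω}

lemma phiR_eq_charFun_map {U : Ω → ℝ} (hU : AEMeasurable U μ) (r : ℝ) :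
    phiR μ U r = charFun (μ.map U) r := by
  rw [charFun_apply_real, integral_map hU (by fun_prop)]
  simp only [phiR, ofReal_mul, mul_comm I]

lemma phiRR_self (U : Ω → ℝ) (r s : ℝ) : phiRR μ U U r s = phiR μ U (r + s) := by
  simp only [phiRR, phiR, add_mul]

lemma phiR_add_of_indepFun [IsFiniteMeasure μ] {X Y : Ω → ℝ} (hX : AEMeasurable X μ)
    (hY : AEMeasurable Y μ) (hXY : IndepFun X Y μ) (r : ℝ) :
    phiR μ (fun ω => X ω + Y ω) r = phiR μ X r * phiR μ Y r := by
  rw [phiR_eq_charFun_map (U := fun ω => X ω + Y ω) (hX.add hY),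
    hXY.charFun_map_fun_add_eq_mul hX hY, Pi.mul_apply, phiR_eq_charFun_map hX,
    phiR_eq_charFun_map hY]

lemma phiR_of_map_eq_gaussianReal {Y : Ω → ℝ} {m : ℝ} {v : NNReal}
    (hY : μ.map Y = gaussianReal m v) (r : ℝ) :
    phiR μ Y r = exp (r * m * I - v * r ^ 2 / 2) := by
  have hYm : AEMeasurable Y μ := aemeasurable_of_map_neZero (by rw [hY]; infer_instance)
  rw [phiR_eq_charFun_map hYm, hY, charFun_gaussianReal]

lemma phiR_add_centered_gaussian_mul_exp [IsFiniteMeasure μ] {X e : Ω → ℝ}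
    (hX : AEMeasurable X μ) {v : NNReal} (he_gauss : μ.map e = gaussianReal 0 v)
    (hindep : IndepFun e X μ) (r : ℝ) :
    phiR μ (fun ω => X ω + e ω) r * exp ((v * r ^ 2 / 2 : ℝ) : ℂ) = phiR μ X r := by
  have he : AEMeasurable e μ := aemeasurable_of_map_neZero (by rw [he_gauss]; infer_instance)
  rw [phiR_add_of_indepFun hX he hindep.symm, phiR_of_map_eq_gaussianReal he_gauss, mul_assoc,
    ← exp_add]
  convert mul_one (phiR μ X r) using 2
  rw [← exp_zero]
  push_cast
  ring_nf

end CharacteristicFunctions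

theorem dcovStar_marginal_eq_general
    {Ω : Type*} [MeasureSpace Ω] (μ : Measure Ω) [IsProbabilityMeasure μ]
    (Xk ek : Ω → ℝ) (hXk : Measurable Xk)
    (v : NNReal)
    (hGauss : Measure.map ek μ = gaussianReal 0 v)
    (hindep : IndepFun ek Xk μ) :
    dcovStar2XX μ (fun ω => Xk ω + ek ω) (v : ℝ) = dcov2 μ Xk Xk := by
  have hcorr := phiR_add_centered_gaussian_mul_exp hXk.aemeasurable hGauss hindep
  simp only [dcovStar2XX, dcov2, phiRR_self, hcorr]

/-- Under the Gaussian measurement error model `X*_k = X_k + ε_k` with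
`ε_k ~ N(0, σ²_k)` independent of `X_k`, the error-corrected marginal distance variance
satisfies `dcov*(X*_k, X*_k) = dcov(X_k, X_k)`. -/
theorem dcovStar_marginal_eq
    {Ω : Type*} [MeasureSpace Ω] (μ : Measure Ω) [IsProbabilityMeasure μ]
    (Xk ek : Ω → ℝ) (hXk : Measurable Xk) (hek : Measurable ek)
    (v : NNReal)
    (hGauss : Measure.map ek μ = gaussianReal 0 v)
    (hindep : IndepFun ek Xk μ) :
    dcovStar2XX μ (fun ω => Xk ω + ek ω) (v : ℝ) = dcov2 μ Xk Xk :=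
  dcovStar_marginal_eq_general μ Xk ek hXk v hGauss hindep
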